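/- arXiv:2006.11311 — 3 statements merged into one kernel-verified Lean document; each statement's English description precedes it below -/
import Mathlib

section
/- Let y : [0,T) → [0,∞) be a C¹ function satisfying y'(t) ≥ -C₁ + C₂ y(t)^p for all t ∈ [0,T), where C₁ > 0, C₂ > 0, p > 1, and assume C₂ y(0)^p > C₁. Then T ≤ ∫_{y(0)}^∞ dz / (C₂ z^p - C₁), and in particular T is finite. -/
open Set MeasureTheory

lemma apply_le_of_hasDerivWithinAt_pos_of_eq {y y' : ℝ → ℝ} {a T : ℝ}
    (hy : ∀ t ∈ Ico a T, HasDerivWithinAt y (y' t) (Ico a T) t)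
    (hpos : ∀ t ∈ Ico a T, y t = y a → 0 < y' t) :
    ∀ t ∈ Ico a T, y a ≤ y t := by
  intro t ht
  have hsub : Icc a t ⊆ Ico a T := Icc_subset_Ico_right ht.2
  refine image_le_of_deriv_right_lt_deriv_boundary' (f := fun _ => y a) (f' := fun _ => 0)
    continuousOn_const (fun _ _ => hasDerivWithinAt_const _ _ _) le_rfl
    (fun s hs => (hy s (hsub hs)).continuousWithinAt.mono hsub)
    (fun s hs => (hy s (hsub (Ico_subset_Icc_self hs))).mono_of_mem_nhdsWithin
      (Ico_mem_nhdsGE_of_mem (hsub (Ico_subset_Icc_self hs))))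
    (fun s hs hs_eq => hpos s (hsub (Ico_subset_Icc_self hs)) hs_eq.symm) ⟨ht.1, le_rfl⟩

lemma hasDerivAt_integral_one_div {g : ℝ → ℝ} {a b : ℝ} (hg : Continuous g)
    (hg₀ : ∀ z ∈ Icc a b, g z ≠ 0) (hab : a ≤ b) :
    HasDerivAt (fun u => ∫ z in a..u, 1 / g z) (1 / g b) b := by
  have hcont : ContinuousOn (fun z => 1 / g z) (uIcc a b) := by
    rw [uIcc_of_le hab]
    exact continuousOn_const.div hg.continuousOn hg₀
  exact intervalIntegral.integral_hasDerivAt_right hcont.intervalIntegrable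
    (measurable_const.div hg.measurable).stronglyMeasurable.stronglyMeasurableAtFilter
    (continuousAt_const.div hg.continuousAt (hg₀ b ⟨hab, le_rfl⟩))

/-- The right-hand side is the blow-up time of the solution of `z' = g z` with `z a = y a`, and
the supersolution `y` cannot outlive it. -/
lemma sub_le_integral_one_div_of_le_deriv {g y y' : ℝ → ℝ} {a T : ℝ} (haT : a < T)
    (hy : ∀ t ∈ Ico a T, HasDerivWithinAt y (y' t) (Ico a T) t)
    (hg : Continuous g) (hg_pos : ∀ z ∈ Ici (y a), 0 < g z)
    (hg_int : IntegrableOn (fun z => 1 / g z) (Ioi (y a)))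
    (hineq : ∀ t ∈ Ico a T, g (y t) ≤ y' t) :
    T - a ≤ ∫ z in Ioi (y a), 1 / g z := by
  have hya : ∀ t ∈ Ico a T, y a ≤ y t := apply_le_of_hasDerivWithinAt_pos_of_eq hy
    fun t ht ht_eq => (hg_pos (y t) ht_eq.ge).trans_le (hineq t ht)
  set F : ℝ → ℝ := fun u => ∫ z in (y a)..u, 1 / g z
  -- `t ↦ F (y t) - t` is nondecreasing since `(F ∘ y)' = y' / g (y) ≥ 1`.
  have hFy : ∀ t ∈ Ico a T, HasDerivWithinAt (F ∘ y) (1 / g (y t) * y' t) (Ico a T) t :=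
    fun t ht => (hasDerivAt_integral_one_div hg (fun z hz => (hg_pos z hz.1).ne')
      (hya t ht)).comp_hasDerivWithinAt t (hy t ht)
  have hle : ∀ t ∈ Ico a T, t - a ≤ F (y t) := by
    intro t ht
    have hsub : Icc a t ⊆ Ico a T := Icc_subset_Ico_right ht.2
    refine image_le_of_deriv_right_le_deriv_boundary (f' := fun _ => 1)
      (continuousOn_id.sub continuousOn_const)
      (fun s _ => (hasDerivWithinAt_id s _).sub_const a) (by simp [F])
      (fun s hs => (hFy s (hsub hs)).continuousWithinAt.mono hsub)
      (fun s hs => (hFy s (hsub (Ico_subset_Icc_self hs))).mono_of_mem_nhdsWithin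
        (Ico_mem_nhdsGE_of_mem (hsub (Ico_subset_Icc_self hs))))
      (fun s hs => ?_) ⟨ht.1, le_rfl⟩
    have hs' := hsub (Ico_subset_Icc_self hs)
    rw [one_div_mul_eq_div, one_le_div (hg_pos _ (hya s hs'))]
    exact hineq s hs'
  have hF_le : ∀ t ∈ Ico a T, F (y t) ≤ ∫ z in Ioi (y a), 1 / g z := by
    intro t ht
    change ∫ z in (y a)..(y t), 1 / g z ≤ _
    rw [intervalIntegral.integral_of_le (hya t ht)]
    refine setIntegral_mono_set hg_int ?_ Ioc_subset_Ioi_self.eventuallyLE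
    filter_upwards [ae_restrict_mem measurableSet_Ioi] with z hz
    exact (one_div_pos.2 (hg_pos z (mem_Ici.2 (le_of_lt hz)))).le
  refine le_of_forall_lt_imp_le_of_dense fun s hs => ?_
  have ht : max (s + a) a ∈ Ico a T := ⟨le_max_right _ _, max_lt (by linarith) haT⟩
  linarith [le_max_left (s + a) a, hle _ ht, hF_le _ ht]

lemma integrableOn_Ioi_one_div_mul_rpow_sub {a c₁ c₂ p : ℝ} (hp : 1 < p) (ha : 0 ≤ a)
    (hc₁ : 0 ≤ c₁) (h : c₁ < c₂ * a ^ p) :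
    IntegrableOn (fun z => 1 / (c₂ * z ^ p - c₁)) (Ioi a) := by
  have ha_pos : 0 < a := by
    refine ha.lt_of_ne fun ha0 => ?_
    rw [← ha0, Real.zero_rpow (by linarith), mul_zero] at h
    linarith
  have hap : 0 < a ^ p := Real.rpow_pos_of_pos ha_pos p
  set δ := c₂ - c₁ / a ^ p
  have hδ : 0 < δ := by rwa [sub_pos, div_lt_iff₀ hap]
  -- For `z ≥ a`, `c₁ = (c₁ / a ^ p) a ^ p ≤ (c₁ / a ^ p) z ^ p`.
  have hlower : ∀ z ∈ Ioi a, δ * z ^ p ≤ c₂ * z ^ p - c₁ := by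
    intro z hz
    have hpow : a ^ p ≤ z ^ p := Real.rpow_le_rpow ha (le_of_lt hz) (by linarith)
    have := mul_le_mul_of_nonneg_left hpow (div_nonneg hc₁ hap.le)
    rw [div_mul_cancel₀ _ hap.ne'] at this
    linarith
  refine Integrable.mono'
    ((integrableOn_Ioi_rpow_of_lt (by linarith : -p < -1) ha_pos).const_mul δ⁻¹)
    (by fun_prop : Measurable fun z : ℝ => 1 / (c₂ * z ^ p - c₁)).aestronglyMeasurable ?_
  filter_upwards [ae_restrict_mem measurableSet_Ioi] with z hz
  have hzp : 0 < δ * z ^ p := mul_pos hδ (Real.rpow_pos_of_pos (ha_pos.trans hz) p)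
  rw [Real.norm_eq_abs, abs_of_pos (one_div_pos.2 (hzp.trans_le (hlower z hz))),
    Real.rpow_neg (ha_pos.trans hz).le, ← mul_inv, ← one_div]
  exact one_div_le_one_div_of_le hzp (hlower z hz)

theorem blowup_time_bound_C1_pos_general
    (T : ℝ) (hT : 0 < T) (y y' : ℝ → ℝ) (C₁ C₂ p : ℝ)
    (hC₁ : 0 < C₁) (hC₂ : 0 < C₂) (hp : 1 < p)
    (hy : ∀ t ∈ Ico (0:ℝ) T, HasDerivWithinAt y (y' t) (Ico (0:ℝ) T) t)
    (hnn : ∀ t ∈ Ico (0:ℝ) T, 0 ≤ y t)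
    (h0 : C₁ < C₂ * y 0 ^ p)
    (hineq : ∀ t ∈ Ico (0:ℝ) T, y' t ≥ -C₁ + C₂ * y t ^ p) :
    T ≤ ∫ z in Ioi (y 0), 1 / (C₂ * z ^ p - C₁) := by
  have hy₀ : 0 ≤ y 0 := hnn 0 ⟨le_rfl, hT⟩
  have hp₀ : 0 ≤ p := zero_le_one.trans hp.le
  have hg : Continuous fun z : ℝ => C₂ * z ^ p - C₁ :=
    (continuous_const.mul (Real.continuous_rpow_const hp₀)).sub continuous_const
  have hg_pos : ∀ z ∈ Ici (y 0), 0 < C₂ * z ^ p - C₁ := fun z hz => by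
    have := mul_le_mul_of_nonneg_left (Real.rpow_le_rpow hy₀ hz hp₀) hC₂.le
    linarith
  simpa using sub_le_integral_one_div_of_le_deriv hT hy hg hg_pos
    (integrableOn_Ioi_one_div_mul_rpow_sub hp hy₀ hC₁.le h0)
    fun t ht => by linarith [hineq t ht]

theorem blowup_time_bound_C1_pos
    (T : ℝ) (hT : 0 < T) (y y' : ℝ → ℝ) (C₁ C₂ p : ℝ)
    (hC₁ : 0 < C₁) (hC₂ : 0 < C₂) (hp : 1 < p)
    (hy : ∀ t ∈ Ico (0:ℝ) T, HasDerivWithinAt y (y' t) (Ico (0:ℝ) T) t)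
    (hy'cont : ContinuousOn y' (Ico (0:ℝ) T))
    (hnn : ∀ t ∈ Ico (0:ℝ) T, 0 ≤ y t)
    (h0 : C₁ < C₂ * y 0 ^ p)
    (hineq : ∀ t ∈ Ico (0:ℝ) T, y' t ≥ -C₁ + C₂ * y t ^ p) :
    T ≤ ∫ z in Ioi (y 0), 1 / (C₂ * z ^ p - C₁) :=
  blowup_time_bound_C1_pos_general T hT y y' C₁ C₂ p hC₁ hC₂ hp hy hnn h0 hineq
end

section
/- Let f : ℝ → ℝ be a C¹ convex function with f(0) = 0, and suppose there exists λ > 0 such that f(s) > 0 for all s ≥ λ, and ∫_λ^∞ ds/f(s) < ∞. Then for every μ > 0 there exists C ≥ λ such that f(s) ≥ μ s for all s ≥ C. -/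
/-! Convexity and `f 0 = 0` make the slope `f s / s` nondecreasing on `(0, ∞)`. If it stayed
below `μ` somewhere beyond every `C`, monotonicity would give `f s ≤ μ s` on all of `[λ, ∞)`, so
`1 / f` would dominate `1 / (μ s)`, which is not integrable there. -/

open Set MeasureTheory

theorem ConvexOn.div_le_div_of_map_zero {f : ℝ → ℝ} (hf : ConvexOn ℝ (Ici 0) f) (hf0 : f 0 = 0)
    {a b : ℝ} (ha : 0 < a) (hab : a ≤ b) : f a / a ≤ f b / b := by
  simpa [hf0] using hf.secant_mono self_mem_Ici ha.le (ha.le.trans hab) ha.ne'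
    (ha.trans_le hab).ne' hab

theorem not_integrableOn_Ici_one_div_of_le_mul {g : ℝ → ℝ} {a c : ℝ} (ha : 0 < a)
    (hpos : ∀ s ≥ a, 0 < g s) (hle : ∀ s ≥ a, g s ≤ c * s) :
    ¬IntegrableOn (fun s => 1 / g s) (Ici a) := by
  intro hint
  refine not_integrableOn_Ici_inv ((hint.const_mul c).mono' measurable_inv.aestronglyMeasurable ?_)
  filter_upwards [ae_restrict_mem measurableSet_Ici] with s (hs : a ≤ s)
  have hs0 : 0 < s := ha.trans_le hs
  rw [norm_inv, Real.norm_of_nonneg hs0.le, mul_one_div, le_div_iff₀ (hpos s hs),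
    inv_mul_le_iff₀ hs0, mul_comm]
  exact hle s hs

theorem convex_integrable_reciprocal_superlinear_general
    (f : ℝ → ℝ) (hconv : ConvexOn ℝ univ f)
    (hf0 : f 0 = 0) (lam : ℝ) (hlam : 0 < lam)
    (hpos : ∀ s ≥ lam, 0 < f s)
    (hint : IntegrableOn (fun s => 1 / f s) (Ici lam)) :
    ∀ μ > (0:ℝ), ∃ C ≥ lam, ∀ s ≥ C, f s ≥ μ * s := by
  intro μ _
  by_contra! hsmall
  have hconv₀ : ConvexOn ℝ (Ici 0) f := hconv.subset (subset_univ _) (convex_Ici 0)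
  refine not_integrableOn_Ici_one_div_of_le_mul (c := μ) hlam hpos (fun C hC => ?_) hint
  obtain ⟨s, hCs, hs⟩ := hsmall C hC
  have hC0 : 0 < C := hlam.trans_le hC
  have hslope : f C / C < μ :=
    (hconv₀.div_le_div_of_map_zero hf0 hC0 hCs).trans_lt ((div_lt_iff₀ (hC0.trans_le hCs)).2 hs)
  exact ((div_lt_iff₀ hC0).1 hslope).le

theorem convex_integrable_reciprocal_superlinear
    (f : ℝ → ℝ) (hf : ContDiff ℝ 1 f) (hconv : ConvexOn ℝ univ f)
    (hf0 : f 0 = 0) (lam : ℝ) (hlam : 0 < lam)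
    (hpos : ∀ s ≥ lam, 0 < f s)
    (hint : IntegrableOn (fun s => 1 / f s) (Ici lam)) :
    ∀ μ > (0:ℝ), ∃ C ≥ lam, ∀ s ≥ C, f s ≥ μ * s :=
  convex_integrable_reciprocal_superlinear_general f hconv hf0 lam hlam hpos hint
end

section
/- Let f : ℝ → ℝ be continuous with f(s) > 0 for s ≥ λ (for some λ > 0) and ∫_λ^∞ ds/f(s) < ∞. Let ζ : [0,∞) → [0,∞) be continuous with inf_{t≥0} ∫_0^t (ζ(s)−1) ds =: m ∈ (−∞, 0]. Suppose y : [0,T) → ℝ is C¹, y(0) ≥ λ, and y'(t) ≥ (ζ(t)/2) f(y(t)) for all t ∈ [0,T), and suppose moreover f is nondecreasing on [λ,∞). Then T ≤ −m + 2 ∫_{y(0)}^∞ ds/f(s). -/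
/-!
Dividing the differential inequality by `f (y t)` gives `(Φ ∘ y)' ≥ ζ / 2` for the primitive
`Φ x = ∫_{y 0}^x ds / f s`, hence `t + m ≤ ∫_0^t ζ ≤ 2 Φ (y t) ≤ 2 ∫_{y 0}^∞ ds / f s`
for every `t < T`. Dividing by `f (y t)` is legitimate because `y` never drops below
`y 0 ≥ λ`: wherever `y ≥ y 0`, continuity keeps `f ∘ y` positive a little further to the
right, so `y' ≥ 0` there.
-/

open Set MeasureTheory intervalIntegral Filter Topology

theorem image_ge_of_deriv_right_eventually_nonneg {y y' : ℝ → ℝ} {a b c : ℝ}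
    (hcont : ContinuousOn y (Icc a b))
    (hderiv : ∀ t ∈ Ico a b, HasDerivWithinAt y (y' t) (Ici t) t) (ha : c ≤ y a)
    (hnonneg : ∀ t ∈ Ico a b, c ≤ y t → ∀ᶠ s in 𝓝[≥] t, 0 ≤ y' s) :
    ∀ ⦃t⦄, t ∈ Icc a b → c ≤ y t := by
  have hclosed : IsClosed ({t | c ≤ y t} ∩ Icc a b) := by
    rw [inter_comm]
    exact hcont.preimage_isClosed_of_isClosed isClosed_Icc isClosed_Ici
  refine hclosed.Icc_subset_of_forall_mem_nhdsWithin ha fun x ⟨hcx, hx⟩ => ?_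
  obtain ⟨u, hxu, hu⟩ := (nhdsGE_basis x).eventually_iff.1 (hnonneg x hx hcx)
  refine mem_of_superset (Ioo_mem_nhdsGT (lt_min hxu hx.2)) fun r hr => ?_
  have hrb : r ≤ b := (hr.2.trans_le (min_le_right _ _)).le
  have hyx_le : y x ≤ y r :=
    image_le_of_deriv_right_le_deriv_boundary (f' := 0) continuousOn_const
      (fun _ _ => hasDerivWithinAt_const _ _ _) le_rfl
      (hcont.mono (Icc_subset_Icc hx.1 hrb))
      (fun s hs => hderiv s (Ico_subset_Ico hx.1 hrb hs))
      (fun s hs => hu ⟨hs.1, hs.2.trans (hr.2.trans_le (min_le_left _ _))⟩)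
      (right_mem_Icc.2 hr.1.le)
  exact hcx.trans hyx_le

theorem hasDerivWithinAt_Ici_of_Ico {y y' : ℝ → ℝ} {a b : ℝ}
    (hy : ∀ t ∈ Ico a b, HasDerivWithinAt y (y' t) (Ico a b) t) :
    ∀ t ∈ Ico a b, HasDerivWithinAt y (y' t) (Ici t) t := fun t ht =>
  (hy t ht).mono_of_mem_nhdsWithin
    (mem_of_superset (Ico_mem_nhdsGE ht.2) (Ico_subset_Ico_left ht.1))

theorem hasDerivAt_integral_one_div_s3 {f : ℝ → ℝ} {lam a x : ℝ} (hf : Continuous f)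
    (hpos : ∀ s ≥ lam, 0 < f s) (hint : IntegrableOn (fun s => 1 / f s) (Ici lam))
    (ha : lam ≤ a) (hx : lam ≤ x) :
    HasDerivAt (fun u => ∫ s in a..u, 1 / f s) (1 / f x) x :=
  integral_hasDerivAt_right
    (hint.mono_set fun _ hs => (le_inf ha hx).trans hs.1).intervalIntegrable
    (measurable_const.div hf.measurable).aestronglyMeasurable.stronglyMeasurableAtFilter
    (continuousAt_const.div hf.continuousAt (hpos x hx).ne')

theorem apply_zero_le_of_mul_le_deriv {f y y' ζ : ℝ → ℝ} {lam T : ℝ} (hf : Continuous f)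
    (hpos : ∀ s ≥ lam, 0 < f s) (hζnn : ∀ t ≥ (0:ℝ), 0 ≤ ζ t)
    (hy : ∀ t ∈ Ico (0:ℝ) T, HasDerivWithinAt y (y' t) (Ico (0:ℝ) T) t)
    (hy0 : lam ≤ y 0) (hineq : ∀ t ∈ Ico (0:ℝ) T, ζ t / 2 * f (y t) ≤ y' t) :
    ∀ t ∈ Ico (0:ℝ) T, y 0 ≤ y t := by
  intro t ht
  have hsub : Icc 0 t ⊆ Ico 0 T := Icc_subset_Ico_right ht.2
  refine image_ge_of_deriv_right_eventually_nonneg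
    (fun s hs => ((hy s (hsub hs)).continuousWithinAt).mono hsub)
    (fun s hs => hasDerivWithinAt_Ici_of_Ico hy s (hsub (Ico_subset_Icc_self hs))) le_rfl
    (fun s hs hys => ?_) (right_mem_Icc.2 ht.1)
  have hsT : s ∈ Ico 0 T := hsub (Ico_subset_Icc_self hs)
  have hIco : Ico 0 T ∈ 𝓝[≥] s :=
    mem_of_superset (Ico_mem_nhdsGE hsT.2) (Ico_subset_Ico_left hsT.1)
  have hfy : ∀ᶠ r in 𝓝[≥] s, 0 < f (y r) :=
    ((hf.continuousAt.comp_continuousWithinAt (hy s hsT).continuousWithinAt).mono_of_mem_nhdsWithin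
      hIco).eventually (lt_mem_nhds (hpos _ (hy0.trans hys)))
  filter_upwards [hfy, hIco] with r hr hrT
  exact (mul_nonneg (div_nonneg (hζnn r hrT.1) zero_le_two) hr.le).trans (hineq r hrT)

theorem integral_le_two_mul_integral_one_div {f y y' ζ : ℝ → ℝ} {lam T t : ℝ}
    (hf : Continuous f) (hpos : ∀ s ≥ lam, 0 < f s)
    (hint : IntegrableOn (fun s => 1 / f s) (Ici lam)) (hζ : Continuous ζ)
    (hy : ∀ t ∈ Ico (0:ℝ) T, HasDerivWithinAt y (y' t) (Ico (0:ℝ) T) t)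
    (hylam : ∀ t ∈ Ico (0:ℝ) T, lam ≤ y t)
    (hineq : ∀ t ∈ Ico (0:ℝ) T, ζ t / 2 * f (y t) ≤ y' t) (ht : t ∈ Ico 0 T) :
    ∫ s in (0:ℝ)..t, ζ s ≤ 2 * ∫ s in y 0..y t, 1 / f s := by
  have hsub : Icc 0 t ⊆ Ico 0 T := Icc_subset_Ico_right ht.2
  have hΦ : ∀ s ∈ Ico 0 T,
      HasDerivAt (fun u => ∫ r in y 0..u, 1 / f r) (1 / f (y s)) (y s) := fun s hs =>
    hasDerivAt_integral_one_div_s3 hf hpos hint (hylam 0 ⟨le_rfl, ht.1.trans_lt ht.2⟩) (hylam s hs)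
  have hZ : ∀ s, HasDerivAt (fun u => ∫ r in (0:ℝ)..u, ζ r) (ζ s) s := fun s =>
    integral_hasDerivAt_right (hζ.intervalIntegrable 0 s) (hζ.stronglyMeasurableAtFilter _ _)
      hζ.continuousAt
  refine image_le_of_deriv_right_le_deriv_boundary
    (fun s _ => (hZ s).continuousAt.continuousWithinAt) (fun s _ => (hZ s).hasDerivWithinAt)
    (B := fun u => 2 * ∫ r in y 0..y u, 1 / f r) (B' := fun s => 2 * (1 / f (y s) * y' s))
    (by simp)
    (fun s hs => ((hΦ s (hsub hs)).continuousAt.comp_continuousWithinAt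
      ((hy s (hsub hs)).continuousWithinAt.mono hsub)).const_mul 2)
    (fun s hs => (((hΦ s (hsub (Ico_subset_Icc_self hs))).comp_hasDerivWithinAt s
      (hasDerivWithinAt_Ici_of_Ico hy s (hsub (Ico_subset_Icc_self hs))))).const_mul 2)
    (fun s hs => ?_) (right_mem_Icc.2 ht.1)
  have hsT : s ∈ Ico 0 T := hsub (Ico_subset_Icc_self hs)
  have hζ_le : ζ s / 2 ≤ y' s / f (y s) :=
    (le_div_iff₀ (hpos _ (hylam s hsT))).2 (hineq s hsT)
  rw [one_div_mul_eq_div]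
  linarith

theorem add_le_integral_of_mem_lowerBounds {ζ : ℝ → ℝ} {m t : ℝ}
    (hζ : IntervalIntegrable ζ volume 0 t)
    (hm : m ∈ lowerBounds {x : ℝ | ∃ t ≥ (0:ℝ), x = ∫ s in (0:ℝ)..t, (ζ s - 1)})
    (ht : 0 ≤ t) : t + m ≤ ∫ s in (0:ℝ)..t, ζ s := by
  have hmt := hm ⟨t, ht, rfl⟩
  rw [integral_sub hζ intervalIntegrable_const, intervalIntegral.integral_const, sub_zero,
    smul_eq_mul, mul_one] at hmt
  linarith

theorem integral_le_setIntegral_Ioi {g : ℝ → ℝ} {a b : ℝ} (hg : IntegrableOn g (Ioi a))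
    (hab : a ≤ b) (hnonneg : ∀ s > a, 0 ≤ g s) :
    ∫ s in a..b, g s ≤ ∫ s in Ioi a, g s := by
  rw [← integral_interval_add_Ioi hg (hg.mono_set (Ioi_subset_Ioi hab))]
  exact le_add_of_nonneg_right
    (setIntegral_nonneg measurableSet_Ioi fun s hs => hnonneg s (hab.trans_lt hs))

theorem blowup_time_bound_eigenfunction_method_general
    (f : ℝ → ℝ) (hf : Continuous f) (lam : ℝ)
    (hpos : ∀ s ≥ lam, 0 < f s)
    (hint : IntegrableOn (fun s => 1 / f s) (Ici lam))
    (ζ : ℝ → ℝ) (hζ : Continuous ζ) (hζnn : ∀ t ≥ (0:ℝ), 0 ≤ ζ t)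
    (m : ℝ) (hm : IsGLB {x : ℝ | ∃ t ≥ (0:ℝ), x = ∫ s in (0:ℝ)..t, (ζ s - 1)} m)
    (T : ℝ) (hT : 0 < T) (y y' : ℝ → ℝ)
    (hy : ∀ t ∈ Ico (0:ℝ) T, HasDerivWithinAt y (y' t) (Ico (0:ℝ) T) t)
    (hy0 : y 0 ≥ lam)
    (hineq : ∀ t ∈ Ico (0:ℝ) T, y' t ≥ ζ t / 2 * f (y t)) :
    T ≤ -m + 2 * ∫ s in Ioi (y 0), 1 / f s := by
  have hy0_le := apply_zero_le_of_mul_le_deriv hf hpos hζnn hy hy0 hineq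
  have hylam : ∀ t ∈ Ico (0:ℝ) T, lam ≤ y t := fun t ht => hy0.trans (hy0_le t ht)
  have hbound : ∀ t ∈ Ico (0:ℝ) T, t ≤ -m + 2 * ∫ s in Ioi (y 0), 1 / f s := by
    intro t ht
    have hζ_int := add_le_integral_of_mem_lowerBounds (hζ.intervalIntegrable 0 t) hm.1 ht.1
    have hΦ := integral_le_two_mul_integral_one_div hf hpos hint hζ hy hylam hineq ht
    have hΦ_le := integral_le_setIntegral_Ioi (hint.mono_set (Ioi_subset_Ici hy0)) (hy0_le t ht)
      fun s hs => (one_div_pos.2 (hpos s (hy0.trans hs.le))).le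
    linarith
  refine le_of_forall_lt_imp_le_of_dense fun t htT => ?_
  rcases le_or_gt 0 t with ht | ht
  · exact hbound t ⟨ht, htT⟩
  · exact ht.le.trans (hbound 0 ⟨le_rfl, hT⟩)

theorem blowup_time_bound_eigenfunction_method
    (f : ℝ → ℝ) (hf : Continuous f) (lam : ℝ) (hlam : 0 < lam)
    (hpos : ∀ s ≥ lam, 0 < f s)
    (hmono : MonotoneOn f (Ici lam))
    (hint : IntegrableOn (fun s => 1 / f s) (Ici lam))
    (ζ : ℝ → ℝ) (hζ : Continuous ζ) (hζnn : ∀ t ≥ (0:ℝ), 0 ≤ ζ t)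
    (m : ℝ) (hm : IsGLB {x : ℝ | ∃ t ≥ (0:ℝ), x = ∫ s in (0:ℝ)..t, (ζ s - 1)} m)
    (hm0 : m ≤ 0)
    (T : ℝ) (hT : 0 < T) (y y' : ℝ → ℝ)
    (hy : ∀ t ∈ Ico (0:ℝ) T, HasDerivWithinAt y (y' t) (Ico (0:ℝ) T) t)
    (hy'cont : ContinuousOn y' (Ico (0:ℝ) T))
    (hy0 : y 0 ≥ lam)
    (hineq : ∀ t ∈ Ico (0:ℝ) T, y' t ≥ ζ t / 2 * f (y t)) :
    T ≤ -m + 2 * ∫ s in Ioi (y 0), 1 / f s :=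
  blowup_time_bound_eigenfunction_method_general f hf lam hpos hint ζ hζ hζnn m hm T hT y y' hy hy0
    hineq
end
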